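/- arXiv:2104.01292 — 5 statements merged into one kernel-verified Lean document; each statement's English description precedes it below -/
import Mathlib

section
/- For a quadratic function u in ℝⁿ with exact values u_j = u(x_j), u_k = u(x_k) and exact gradients ∇u(x_j), ∇u(x_k), the U-MUSCL left state u_L = u_j + (κ/2)(u_k − u_j) + ((1−κ)/2) ∇u(x_j) · (x_k − x_j) and the right state u_R = u_k + (κ/2)(u_j − u_k) + ((1−κ)/2) ∇u(x_k) · (x_j − x_k) satisfy u_L = u_R for every value of the parameter κ. -/
open Matrix

/-- For a quadratic function with exact values and exact gradients, the U-MUSCL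
left and right states coincide for every value of κ. -/
theorem umuscl_quadratic_zero_jump {n : ℕ} (c : ℝ) (b : Fin n → ℝ)
    (A : Matrix (Fin n) (Fin n) ℝ) (hA : A.IsSymm) (xj xk : Fin n → ℝ) (κ : ℝ)
    (u : (Fin n → ℝ) → ℝ)
    (hu : ∀ x, u x = c + b ⬝ᵥ (x - xj) + (1 / 2) * ((x - xj) ⬝ᵥ (A *ᵥ (x - xj))))
    (gradu : (Fin n → ℝ) → (Fin n → ℝ))
    (hgrad : ∀ x, gradu x = b + A *ᵥ (x - xj)) :
    u xj + (κ / 2) * (u xk - u xj) + ((1 - κ) / 2) * (gradu xj ⬝ᵥ (xk - xj)) =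
      u xk + (κ / 2) * (u xj - u xk) +
        ((1 - κ) / 2) * (gradu xk ⬝ᵥ (xj - xk)) := by
  have hjk : xj - xk = -(xk - xj) := by abel
  simp only [hu, hgrad, sub_self, dotProduct_zero, zero_dotProduct, mulVec_zero, hjk,
    dotProduct_neg, add_dotProduct, mulVec_neg, neg_dotProduct,
    dotProduct_comm (A *ᵥ (xk - xj)) (xk - xj)]
  ring
end

section
/- For a quadratic function u in ℝⁿ, the U-MUSCL reconstruction with exact gradients and κ = 1/2 is exact at the edge midpoint: u_L = u_R = u((x_j + x_k)/2), where u_L = u_j + (1/4)(u_k − u_j) + (1/4) ∇u(x_j) · (x_k − x_j). Moreover, κ = 1/2 is the unique value of κ for which u_L equals u((x_j + x_k)/2) whenever the second-order directional term (x_k − x_j)ᵀ A (x_k − x_j) is nonzero. -/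
open Matrix

/-- For a quadratic function, U-MUSCL with exact gradients and κ = 1/2 is exact
at the edge midpoint, and κ = 1/2 is the unique such value when the
second-order directional term is nonzero. -/
theorem umuscl_quadratic_exact_midpoint_kappa_half {n : ℕ} (c : ℝ)
    (b : Fin n → ℝ) (A : Matrix (Fin n) (Fin n) ℝ) (hA : A.IsSymm)
    (xj xk : Fin n → ℝ)
    (u : (Fin n → ℝ) → ℝ)
    (hu : ∀ x, u x = c + b ⬝ᵥ (x - xj) + (1 / 2) * ((x - xj) ⬝ᵥ (A *ᵥ (x - xj))))
    (gradu : (Fin n → ℝ) → (Fin n → ℝ))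
    (hgrad : ∀ x, gradu x = b + A *ᵥ (x - xj))
    (uL : ℝ → ℝ)
    (huL : ∀ κ, uL κ = u xj + (κ / 2) * (u xk - u xj) +
      ((1 - κ) / 2) * (gradu xj ⬝ᵥ (xk - xj)))
    (uR : ℝ → ℝ)
    (huR : ∀ κ, uR κ = u xk + (κ / 2) * (u xj - u xk) +
      ((1 - κ) / 2) * (gradu xk ⬝ᵥ (xj - xk))) :
    uL (1 / 2) = u ((1 / 2 : ℝ) • (xj + xk)) ∧
      uR (1 / 2) = u ((1 / 2 : ℝ) • (xj + xk)) ∧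
      (((xk - xj) ⬝ᵥ (A *ᵥ (xk - xj))) ≠ 0 →
        ∀ κ : ℝ, uL κ = u ((1 / 2 : ℝ) • (xj + xk)) ↔ κ = 1 / 2) := by
  set d : Fin n → ℝ := xk - xj with hd
  set p : ℝ := b ⬝ᵥ d with hp
  set Q : ℝ := d ⬝ᵥ (A *ᵥ d) with hQ
  have hd2 : (1 / 2 : ℝ) • (xj + xk) - xj = (1 / 2 : ℝ) • d := by
    rw [hd]; module
  have hum : u ((1 / 2 : ℝ) • (xj + xk)) = c + (1 / 2) * p + (1 / 8) * Q := by
    rw [hu, hd2]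
    simp only [mulVec_smul, dotProduct_smul, smul_dotProduct, smul_eq_mul, hp, hQ]
    ring
  have huj : u xj = c := by rw [hu]; simp
  have huk : u xk = c + p + (1 / 2) * Q := by rw [hu xk]
  have hgj : gradu xj ⬝ᵥ d = p := by
    rw [hgrad]; simp [hp]
  have hgk : gradu xk ⬝ᵥ (xj - xk) = -p - Q := by
    have hxjk : xj - xk = -d := by rw [hd]; module
    rw [hgrad, hxjk, dotProduct_neg, add_dotProduct, hQ,
      dotProduct_comm (A *ᵥ d) d]
    ring
  have hL : ∀ κ : ℝ, uL κ = c + (1 / 2) * p + (κ / 4) * Q := by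
    intro κ; rw [huL, huj, huk, hgj]; ring
  have hR : ∀ κ : ℝ, uR κ = c + (1 / 2) * p + (κ / 4) * Q := by
    intro κ; rw [huR, huj, huk, hgk]; ring
  refine ⟨by rw [hL, hum]; ring, by rw [hR, hum]; ring, fun hQ0 κ => ?_⟩
  rw [hL, hum]
  constructor
  · intro h
    have : (κ / 4 - 1 / 8) * Q = 0 := by linarith
    rcases mul_eq_zero.mp this with h' | h'
    · linarith
    · exact absurd h' hQ0
  · rintro rfl; ring
end

section
/- On a uniform 1D grid, the U-MUSCL face reconstruction u_{i+1/2} = u_i + (1/4)[(1−κ)(u_i − u_{i−1}) + (1+κ)(u_{i+1} − u_i)] applied to point values of a quadratic polynomial u reproduces u(x_i + h/2) exactly if and only if κ = 1/2 (assuming u'' ≠ 0). -/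
/-- On a uniform 1D grid, the U-MUSCL face reconstruction from point values of
a quadratic polynomial reproduces the face value exactly iff κ = 1/2. -/
theorem umuscl_point_values_face_exact_iff_kappa_half (a b c xi h κ : ℝ)
    (hh : 0 < h) (hc : c ≠ 0)
    (u : ℝ → ℝ) (hu : ∀ x, u x = a + b * (x - xi) + (c / 2) * (x - xi) ^ 2) :
    u xi + (1 / 4) * ((1 - κ) * (u xi - u (xi - h)) +
        (1 + κ) * (u (xi + h) - u xi)) = u (xi + h / 2) ↔ κ = 1 / 2 := by
  simp only [hu]
  ring_nf
  constructor
  · intro hEq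
    have h2 : c * h ^ 2 ≠ 0 := mul_ne_zero hc (by positivity)
    have h3 : c * h ^ 2 * (κ - 1 / 2) = 0 := by linarith
    rcases mul_eq_zero.mp h3 with h4 | h4
    · exact absurd h4 h2
    · linarith
  · intro hk; subst hk; ring
end

section
/- If gradients are computed by a quadratically exact method applied to a quadratic function u (so that ∇u_j = ∇u(x_j) = b and ∇u_k = ∇u(x_k) = b + A(x_k − x_j)), then the U-MUSCL right state expands as u_R = u_j + (1/2) ∂_{jk}u_j + (κ/4) ∂²_{jk}u_j, identical in form to the left state; hence u_R − u_L = 0. -/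
open Matrix

/-- With quadratically exact gradients, the U-MUSCL right state expands in the
same form as the left state, hence the jump u_R − u_L vanishes. -/
theorem umuscl_right_state_expansion_and_zero_jump {n : ℕ} (c : ℝ)
    (b : Fin n → ℝ) (A : Matrix (Fin n) (Fin n) ℝ) (hA : A.IsSymm)
    (xj xk : Fin n → ℝ) (κ : ℝ)
    (u : (Fin n → ℝ) → ℝ)
    (hu : ∀ x, u x = c + b ⬝ᵥ (x - xj) + (1 / 2) * ((x - xj) ⬝ᵥ (A *ᵥ (x - xj))))
    (graduj graduk : Fin n → ℝ)
    (hgj : graduj = b) (hgk : graduk = b + A *ᵥ (xk - xj))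
    (uL uR : ℝ)
    (huL : uL = u xj + (κ / 2) * (u xk - u xj) +
      ((1 - κ) / 2) * (graduj ⬝ᵥ (xk - xj)))
    (huR : uR = u xk + (κ / 2) * (u xj - u xk) +
      ((1 - κ) / 2) * (graduk ⬝ᵥ (xj - xk))) :
    uR = u xj + (1 / 2) * (b ⬝ᵥ (xk - xj)) +
        (κ / 4) * ((xk - xj) ⬝ᵥ (A *ᵥ (xk - xj))) ∧
      uR - uL = 0 := by
  have hjk : xj - xk = -(xk - xj) := by ring
  have hQ : graduk ⬝ᵥ (xj - xk) = -(b ⬝ᵥ (xk - xj)) - (xk - xj) ⬝ᵥ (A *ᵥ (xk - xj)) := by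
    rw [hgk, hjk, dotProduct_neg, add_dotProduct, dotProduct_comm (A *ᵥ (xk - xj))]
    ring
  have h0 : u xj = c := by
    simp [hu xj]
  have h1 : u xk = c + b ⬝ᵥ (xk - xj) + (1 / 2) * ((xk - xj) ⬝ᵥ (A *ᵥ (xk - xj))) := hu xk
  constructor
  · rw [huR, hQ, h0, h1]; ring
  · rw [huR, huL, hQ, hgj, h0, h1]; ring
end

section
/- The unmodified cell-centered U-MUSCL reconstruction u_L = κ (u_j + u_k)/2 + (1−κ)[u_j + b·(x_fc − x_j)] applied to an affine function u(x) = a + b·x yields u_L = u(x_fc) + κ b·((x_j + x_k)/2 − x_fc); hence it fails to be exact for affine functions (loses second-order accuracy) whenever κ ≠ 0 and the face centroid x_fc differs from the midpoint (x_j + x_k)/2 in the direction of b. -/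
open Matrix

/-! For affine `u = a + f`, the upwind term `u xj + f (xfc - xj)` is exactly `u xfc`, so the
reconstruction equals `κ` times the face average plus `(1 - κ) u xfc`. Its error is therefore
`κ` times the error of the face average, which is `f` applied to the offset of the midpoint of
`xj, xk` from the face centroid. -/

section UMUSCL

variable {𝕜 E : Type*} [Field 𝕜] [CharZero 𝕜] [AddCommGroup E] [Module 𝕜 E]

/-- The face value `u_L`; the gradient at `xj` enters as the linear functional `g` (`b ⬝ᵥ ·`). -/
def umusclFaceValue (κ : 𝕜) (u : E → 𝕜) (g : E →ₗ[𝕜] 𝕜) (xj xk xfc : E) : 𝕜 :=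
  κ * ((u xj + u xk) / 2) + (1 - κ) * (u xj + g (xfc - xj))

theorem umusclFaceValue_of_affine (a κ : 𝕜) (f : E →ₗ[𝕜] 𝕜) {u : E → 𝕜}
    (hu : ∀ x, u x = a + f x) (xj xk xfc : E) :
    umusclFaceValue κ u f xj xk xfc = u xfc + κ * f ((1 / 2 : 𝕜) • (xj + xk) - xfc) := by
  simp only [umusclFaceValue, hu, map_sub, map_add, map_smul, smul_eq_mul]
  ring

theorem umusclFaceValue_ne_of_affine {a κ : 𝕜} {f : E →ₗ[𝕜] 𝕜} {u : E → 𝕜}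
    (hu : ∀ x, u x = a + f x) {xj xk xfc : E} (hκ : κ ≠ 0)
    (hf : f ((1 / 2 : 𝕜) • (xj + xk) - xfc) ≠ 0) :
    umusclFaceValue κ u f xj xk xfc ≠ u xfc := by
  rw [umusclFaceValue_of_affine a κ f hu, Ne, add_eq_left]
  exact mul_ne_zero hκ hf

end UMUSCL

/-- The unmodified cell-centered U-MUSCL reconstruction applied to an affine
function has error κ b·((x_j + x_k)/2 − x_fc), hence is inexact whenever
κ ≠ 0 and the face centroid differs from the midpoint in the direction of b. -/
theorem unmodified_cell_centered_umuscl_affine_error {n : ℕ} (a : ℝ)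
    (b xj xk xfc : Fin n → ℝ) (κ : ℝ)
    (u : (Fin n → ℝ) → ℝ) (hu : ∀ x, u x = a + b ⬝ᵥ x) :
    κ * ((u xj + u xk) / 2) + (1 - κ) * (u xj + b ⬝ᵥ (xfc - xj)) =
        u xfc + κ * (b ⬝ᵥ ((1 / 2 : ℝ) • (xj + xk) - xfc)) ∧
      (κ ≠ 0 → b ⬝ᵥ ((1 / 2 : ℝ) • (xj + xk) - xfc) ≠ 0 →
        κ * ((u xj + u xk) / 2) + (1 - κ) * (u xj + b ⬝ᵥ (xfc - xj)) ≠ u xfc) :=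
  have hu' : ∀ x, u x = a + dotProductBilin ℝ ℝ b x := hu
  ⟨umusclFaceValue_of_affine a κ _ hu' xj xk xfc,
    fun hκ hb => umusclFaceValue_ne_of_affine hu' hκ hb⟩
end
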